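/- Whenever v̂₁ ≠ 0 and v̂₂ ≠ 0, the representation f̂·ŵ·χ²_net = (l₁ − ê₁)²·(1/v̂₁ + 1/v̂₂) holds pointwise, where χ²_net = ((l₁−ê₁)²/v̂₁ + (l₂−ê₂)²/v̂₂)/(ŵ·f̂). -/
import Mathlib


open MeasureTheory ProbabilityTheory Filter Topology

namespace Uplift

noncomputable section

/-- The uplift-based responses `lᵢ = a_{T,i} − (nᵢ/kᵢ)·a_{C,i}`. -/
def lval (ni ki aTi aCi : ℝ) : ℝ := aTi - ni / ki * aCi

/-- The pooled target response rate estimator `p̂_T`. -/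
def pThat (n1 n2 aT1 aT2 : ℝ) : ℝ :=
  n1 / (n1 + n2) * (aT1 / n1) + n2 / (n1 + n2) * (aT2 / n2)

/-- The target-weighted control response rate estimator `p̂_C`. -/
def pChat (n1 n2 k1 k2 aC1 aC2 : ℝ) : ℝ :=
  n1 / (n1 + n2) * (aC1 / k1) + n2 / (n1 + n2) * (aC2 / k2)

/-- The estimator `êᵢ = nᵢ·(p̂_T − p̂_C)` of the expectation of `lᵢ`. -/
def ehat (ni n1 n2 k1 k2 aT1 aT2 aC1 aC2 : ℝ) : ℝ :=
  ni * (pThat n1 n2 aT1 aT2 - pChat n1 n2 k1 k2 aC1 aC2)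

/-- The estimator `v̂ᵢ = nᵢ·p̂_{T,i}(1−p̂_{T,i}) + (nᵢ²/kᵢ)·p̂_{C,i}(1−p̂_{C,i})`. -/
def vhat (ni ki aTi aCi : ℝ) : ℝ :=
  ni * (aTi / ni) * (1 - aTi / ni) + ni ^ 2 / ki * ((aCi / ki) * (1 - aCi / ki))

/-- The norming term `ŵ`. -/
def what (n1 n2 k1 k2 aT1 aT2 aC1 aC2 : ℝ) : ℝ :=
  n2 / (n1 + n2) *
      ((aT1 / n1) * (1 - aT1 / n1) + n1 / k1 * ((aC1 / k1) * (1 - aC1 / k1))) +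
    n1 / (n1 + n2) *
      ((aT2 / n2) * (1 - aT2 / n2) + n2 / k2 * ((aC2 / k2) * (1 - aC2 / k2)))

/-- The norming term `f̂`. -/
def fhat (n1 n2 k1 k2 aT1 aT2 aC1 aC2 : ℝ) : ℝ :=
  (n2 / (n1 + n2)) /
      ((aT1 / n1) * (1 - aT1 / n1) + n1 / k1 * ((aC1 / k1) * (1 - aC1 / k1))) +
    (n1 / (n1 + n2)) /
      ((aT2 / n2) * (1 - aT2 / n2) + n2 / k2 * ((aC2 / k2) * (1 - aC2 / k2)))

/-- The `χ²_net` statistic. -/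
def chiSqNet (n1 n2 k1 k2 aT1 aT2 aC1 aC2 : ℝ) : ℝ :=
  ((lval n1 k1 aT1 aC1 - ehat n1 n1 n2 k1 k2 aT1 aT2 aC1 aC2) ^ 2 /
        vhat n1 k1 aT1 aC1 +
      (lval n2 k2 aT2 aC2 - ehat n2 n1 n2 k1 k2 aT1 aT2 aC1 aC2) ^ 2 /
        vhat n2 k2 aT2 aC2) /
    (what n1 n2 k1 k2 aT1 aT2 aC1 aC2 * fhat n1 n2 k1 k2 aT1 aT2 aC1 aC2)

end

end Uplift

/-- Whenever `v̂₁ ≠ 0`, `v̂₂ ≠ 0` (and the norming terms `ŵ`, `f̂` are nonzero), the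
representation `f̂·ŵ·χ²_net = (l₁ − ê₁)²·(1/v̂₁ + 1/v̂₂)` holds pointwise. -/
theorem fhat_mul_what_mul_chiSqNet
    (n1 n2 k1 k2 : ℝ) (hn1 : 0 < n1) (hn2 : 0 < n2) (hk1 : 0 < k1) (hk2 : 0 < k2)
    (aT1 aT2 aC1 aC2 : ℝ)
    (hv1 : Uplift.vhat n1 k1 aT1 aC1 ≠ 0) (hv2 : Uplift.vhat n2 k2 aT2 aC2 ≠ 0)
    (hw : Uplift.what n1 n2 k1 k2 aT1 aT2 aC1 aC2 ≠ 0)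
    (hf : Uplift.fhat n1 n2 k1 k2 aT1 aT2 aC1 aC2 ≠ 0) :
    Uplift.fhat n1 n2 k1 k2 aT1 aT2 aC1 aC2 * Uplift.what n1 n2 k1 k2 aT1 aT2 aC1 aC2 *
        Uplift.chiSqNet n1 n2 k1 k2 aT1 aT2 aC1 aC2 =
      (Uplift.lval n1 k1 aT1 aC1 - Uplift.ehat n1 n1 n2 k1 k2 aT1 aT2 aC1 aC2) ^ 2 *
        (1 / Uplift.vhat n1 k1 aT1 aC1 + 1 / Uplift.vhat n2 k2 aT2 aC2) := by
  have hn : n1 + n2 ≠ 0 := by positivity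
  have key : Uplift.lval n2 k2 aT2 aC2 - Uplift.ehat n2 n1 n2 k1 k2 aT1 aT2 aC1 aC2 =
      -(Uplift.lval n1 k1 aT1 aC1 - Uplift.ehat n1 n1 n2 k1 k2 aT1 aT2 aC1 aC2) := by
    unfold Uplift.lval Uplift.ehat Uplift.pThat Uplift.pChat
    field_simp
    ring
  unfold Uplift.chiSqNet
  rw [key]
  rw [neg_pow]; norm_num
  field_simp
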